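/- Let V have even dimension n over the finite field F_q with n ≡ 4 (mod 6), and let H be a hyperplane of the 3-Grassmannian of V. Then R^↑(H) is not a line spread of PG(V): it is not the case that every 1-dimensional subspace of V lies on exactly one member of R^↑(H). (Proof by double counting point–plane flags: if R^↑(H) were a spread, then setting r = (n−2)/2 ≡ 1 (mod 3), the number (q²+q+1)|H| of flags would equal M·(q^n−1)/(q−1) with M the line count of a rank-r symplectic polar space, contradicting the divisibility obstruction modulo q²+q+1.) -/

import Mathlib

/-!
If `R^↑(H)` were a line spread, the radical of the alternating form `(b, c) ↦ φ (a, b, c)` would,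
for every `a ≠ 0`, be exactly the spread line through `a`, hence `2`-dimensional. Now count the
ordered bases `(a, b, c)` of the `3`-spaces on which `φ` vanishes: grouped by the space they span
there are `|GL₃(q)| · |H|` of them, and grouped by `a` and then by `b` (according as `b` lies in
the radical of `a` or not) there are `(q^n - 1) ((q² - q)(q^n - q²) + (q^n - q²)(q^(n-1) - q²))`.
The first number is divisible by `q² + q + 1`; but modulo `q² + q + 1` we have `q³ ≡ 1` and
`n ≡ 1 (mod 3)`, so the second is `≡ -3 (q + 2)`, which is nonzero for `q ≥ 2`.
-/

open Module Submodule Set Finset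

section

variable {K V : Type*} [Field K] [AddCommGroup V] [Module K V]

theorem linearIndependent_vecThree_iff {a b c : V} :
    LinearIndependent K ![a, b, c] ↔ a ≠ 0 ∧ b ∉ K ∙ a ∧ c ∉ span K {a, b} := by
  rw [linearIndependent_finSucc', linearIndependent_finSucc', linearIndependent_unique_iff]
  have h3 : Fin.init ![a, b, c] = ![a, b] := by ext i; fin_cases i <;> rfl
  have h2 : Fin.init ![a, b] = ![a] := by ext i; fin_cases i; rfl
  simp [h3, h2, Matrix.range_cons, and_assoc, Set.pair_comm b a]

theorem finrank_span_pair {a b : V} (ha : a ≠ 0) (hb : b ∉ K ∙ a) :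
    finrank K (span K {a, b}) = 2 := by
  have hli : LinearIndependent K ![a, b] :=
    (LinearIndependent.pair_iff' ha).mpr fun r hr => hb (mem_span_singleton.mpr ⟨r, hr⟩)
  rw [← Matrix.range_cons_cons_empty a b ![], finrank_span_eq_card hli, Fintype.card_fin]

theorem span_range_eq_of_finrank_eq {ι : Type*} [Fintype ι] {e : ι → V}
    (he : LinearIndependent K e) {U : Submodule K V} [FiniteDimensional K U]
    (heU : ∀ i, e i ∈ U) (hU : finrank K U = Fintype.card ι) : span K (range e) = U :=
  eq_of_le_of_finrank_eq (span_le.mpr (range_subset_iff.mpr heU))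
    (by rw [finrank_span_eq_card he, hU])

def IsLineSpread (S : Set (Submodule K V)) : Prop :=
  ∀ p : Submodule K V, finrank K p = 1 → ∃! A, A ∈ S ∧ p ≤ A

namespace AlternatingMap

def VanishesOn {ι : Type*} (φ : V [⋀^ι]→ₗ[K] K) (U : Submodule K V) : Prop :=
  ∀ v : ι → V, (∀ i, v i ∈ U) → φ v = 0

theorem vanishesOn_span_range {ι : Type*} [Fintype ι] [DecidableEq ι]
    (φ : V [⋀^ι]→ₗ[K] K) {e : ι → V} (he : LinearIndependent K e) (h : φ e = 0) :
    φ.VanishesOn (span K (range e)) := by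
  intro v hv
  let ψ := φ.compLinearMap (span K (range e)).subtype
  have hψ : ψ = 0 := by
    have : ψ (Basis.span he) = φ e := by simp [ψ, Basis.span_apply]
    rw [ψ.eq_smul_basis_det (Basis.span he), this, h, zero_smul]
  exact congrArg (fun f => f fun i => ⟨v i, hv i⟩) hψ

variable (φ : V [⋀^Fin 3]→ₗ[K] K)

/-- The members of `R^↑(H)`, where `H` is the set of `3`-spaces on which `φ` vanishes. -/
def upperRadical : Set (Submodule K V) :=
  {A | finrank K A = 2 ∧ ∀ U : Submodule K V, finrank K U = 3 → A ≤ U → φ.VanishesOn U}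

/-- The alternating form `(b, c) ↦ φ (a, b, c)`; for `a ≠ 0` it induces the polar space `S_p(H)`
on `V / ⟨a⟩`. -/
def pointForm (a : V) : V →ₗ[K] V →ₗ[K] K :=
  LinearMap.mk₂ K (fun b c => φ ![a, b, c])
    (fun b b' c => by
      convert φ.map_update_add ![a, b, c] 1 b b' using 3 <;> (funext i; fin_cases i <;> rfl))
    (fun r b c => by
      convert φ.map_update_smul ![a, b, c] 1 r b using 3 <;> (funext i; fin_cases i <;> rfl))
    (fun b c c' => by
      convert φ.map_update_add ![a, b, c] 2 c c' using 3 <;> (funext i; fin_cases i <;> rfl))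
    (fun r b c => by
      convert φ.map_update_smul ![a, b, c] 2 r c using 3 <;> (funext i; fin_cases i <;> rfl))

@[simp]
theorem pointForm_apply (a b c : V) : φ.pointForm a b c = φ ![a, b, c] := rfl

def pointRadical (a : V) : Submodule K V := LinearMap.ker (φ.pointForm a)

theorem mem_pointRadical {a b : V} : b ∈ φ.pointRadical a ↔ ∀ c, φ ![a, b, c] = 0 := by
  simp [pointRadical, LinearMap.ext_iff]

theorem self_mem_pointRadical (a : V) : a ∈ φ.pointRadical a :=
  φ.mem_pointRadical.mpr fun _ => φ.map_eq_zero_of_eq (i := 0) (j := 1) _ rfl (by decide)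

theorem span_pair_le_ker_pointForm (a b : V) :
    span K {a, b} ≤ LinearMap.ker (φ.pointForm a b) := by
  refine span_le.mpr ?_
  rintro x (rfl | rfl) <;> simp only [SetLike.mem_coe, LinearMap.mem_ker, pointForm_apply]
  · exact φ.map_eq_zero_of_eq (i := 0) (j := 2) _ rfl (by decide)
  · exact φ.map_eq_zero_of_eq (i := 1) (j := 2) _ rfl (by decide)

section FiniteDimensional

variable [FiniteDimensional K V]

theorem le_pointRadical_of_mem_upperRadical {A : Submodule K V} (hA : A ∈ φ.upperRadical)
    {a : V} (ha : a ∈ A) : A ≤ φ.pointRadical a := by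
  intro x hx
  refine φ.mem_pointRadical.mpr fun c => ?_
  by_cases hli : LinearIndependent K ![a, x, c]
  · obtain ⟨ha0, hxa, -⟩ := linearIndependent_vecThree_iff.mp hli
    have hAU : A ≤ span K (range ![a, x, c]) := by
      have hpair : span K {a, x} = A :=
        eq_of_le_of_finrank_eq (span_le.mpr (by rintro y (rfl | rfl) <;> assumption))
          (by rw [finrank_span_pair ha0 hxa, hA.1])
      rw [← hpair]
      exact span_mono (by simp [Matrix.range_cons, Set.insert_subset_iff])
    exact hA.2 _ (by rw [finrank_span_eq_card hli, Fintype.card_fin]) hAU _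
      fun i => subset_span (mem_range_self i)
  · exact φ.map_linearDependent _ hli

theorem span_pair_mem_upperRadical {a b : V} (ha : a ≠ 0) (hb : b ∈ φ.pointRadical a)
    (hba : b ∉ K ∙ a) : span K {a, b} ∈ φ.upperRadical := by
  refine ⟨finrank_span_pair ha hba, fun U hU hle => ?_⟩
  obtain ⟨c, hcU, hc⟩ := SetLike.exists_of_lt (lt_of_le_of_ne hle fun h => by
    rw [← h, finrank_span_pair ha hba] at hU; omega)
  have hli : LinearIndependent K ![a, b, c] := linearIndependent_vecThree_iff.mpr ⟨ha, hba, hc⟩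
  have hspan : span K (range ![a, b, c]) = U := by
    refine span_range_eq_of_finrank_eq hli (fun i => ?_) (by rw [hU, Fintype.card_fin])
    fin_cases i
    exacts [hle (subset_span (by simp)), hle (subset_span (by simp)), hcU]
  rw [← hspan]
  exact φ.vanishesOn_span_range hli (φ.mem_pointRadical.mp hb c)

theorem finrank_pointRadical_of_isLineSpread (h : IsLineSpread φ.upperRadical) {a : V}
    (ha : a ≠ 0) : finrank K (φ.pointRadical a) = 2 := by
  obtain ⟨A, ⟨hA, haA⟩, huniq⟩ := h (K ∙ a) (finrank_span_singleton ha)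
  suffices φ.pointRadical a = A by rw [this, hA.1]
  refine le_antisymm (fun b hb => ?_)
    (φ.le_pointRadical_of_mem_upperRadical hA (haA (mem_span_singleton_self a)))
  by_cases hba : b ∈ K ∙ a
  · exact haA hba
  · have := huniq _ ⟨φ.span_pair_mem_upperRadical ha hb hba, span_mono (by simp)⟩
    exact this ▸ subset_span (by simp)

end FiniteDimensional

end AlternatingMap

section Counting

open scoped Classical

variable [Fintype K] [Fintype V]

local notation "q" => Fintype.card K

theorem card_filter_mem (U : Submodule K V) :
    #{x | x ∈ U} = q ^ finrank K U := by
  rw [← Fintype.card_subtype, ← card_eq_pow_finrank (K := K) (V := U)]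

theorem card_filter_mem_and_not_mem {W U : Submodule K V} (hWU : W ≤ U) :
    #{x | x ∈ U ∧ x ∉ W} = q ^ finrank K U - q ^ finrank K W := by
  rw [← card_filter_mem, ← card_filter_mem, ← card_sdiff_of_subset]
  · congr 1; ext x; simp
  · intro x; simpa using @hWU x

theorem card_frames {k : ℕ} {U : Submodule K V} (hU : finrank K U = k) :
    #{v : Fin k → V | LinearIndependent K v ∧ span K (range v) = U}
      = ∏ i : Fin k, (q ^ k - q ^ (i : ℕ)) := by
  let e : {v : Fin k → V // LinearIndependent K v ∧ span K (range v) = U} ≃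
      {s : Fin k → U // LinearIndependent K s} :=
    { toFun v := ⟨fun i => ⟨v.1 i, v.2.2.le (subset_span (mem_range_self i))⟩,
        LinearIndependent.of_comp U.subtype v.2.1⟩
      invFun s := ⟨U.subtype ∘ s.1, s.2.map' _ U.ker_subtype,
        span_range_eq_of_finrank_eq (s.2.map' _ U.ker_subtype) (fun i => (s.1 i).2)
          (by rw [hU, Fintype.card_fin])⟩ }
  rw [← Fintype.card_subtype, ← Nat.card_eq_fintype_card, Nat.card_congr e,
    card_linearIndependent hU.ge, hU]

theorem card_filter_vecThree {β : Type*} [Fintype β] (s : Finset (Fin 3 → β)) (a b : β) :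
    #{v ∈ s | v 0 = a ∧ v 1 = b} = #{c | ![a, b, c] ∈ s} := by
  have heta {v : Fin 3 → β} (ha : v 0 = a) (hb : v 1 = b) : ![a, b, v 2] = v := by
    ext i; fin_cases i <;> simp [ha, hb]
  refine card_nbij' (· 2) (fun c => ![a, b, c]) ?_ ?_ ?_ ?_
  · intro v hv
    simp only [mem_coe, mem_filter, Finset.mem_univ, true_and] at hv ⊢
    rw [heta hv.2.1 hv.2.2]
    exact hv.1
  · intro c hc
    simpa using hc
  · intro v hv
    simp only [mem_coe, mem_filter] at hv
    exact heta hv.2.1 hv.2.2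
  · intro c _
    rfl

namespace AlternatingMap

noncomputable def isotropicFrames {k : ℕ} (φ : V [⋀^Fin k]→ₗ[K] K) :
    Finset (Fin k → V) :=
  {v | LinearIndependent K v ∧ φ v = 0}

theorem prod_dvd_card_isotropicFrames {k : ℕ} (φ : V [⋀^Fin k]→ₗ[K] K) :
    ∏ i : Fin k, (q ^ k - q ^ (i : ℕ)) ∣ #φ.isotropicFrames := by
  rw [card_eq_sum_card_fiberwise (f := fun v => span K (range v))
    (t := φ.isotropicFrames.image fun v => span K (range v)) fun v hv => mem_image_of_mem _ hv]
  refine dvd_sum fun U hU => ?_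
  obtain ⟨v₀, hv₀, rfl⟩ := mem_image.mp hU
  simp only [isotropicFrames, mem_filter, Finset.mem_univ, true_and] at hv₀
  have hfiber : {v ∈ φ.isotropicFrames | span K (range v) = span K (range v₀)} =
      ({v | LinearIndependent K v ∧ span K (range v) = span K (range v₀)} : Finset _) := by
    ext v
    simp only [isotropicFrames, filter_filter, mem_filter, Finset.mem_univ, true_and]
    refine ⟨fun h => ⟨h.1.1, h.2⟩, fun h => ⟨⟨h.1, ?_⟩, h.2⟩⟩
    exact φ.vanishesOn_span_range hv₀.1 hv₀.2 v fun i => h.2 ▸ subset_span (mem_range_self i)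
  rw [hfiber, card_frames (by rw [finrank_span_eq_card hv₀.1, Fintype.card_fin])]

variable (φ : V [⋀^Fin 3]→ₗ[K] K)

theorem card_filter_vecThree_mem_isotropicFrames {a : V} (ha : a ≠ 0) (b : V) :
    #{c | ![a, b, c] ∈ φ.isotropicFrames} =
      if b ∈ K ∙ a then 0
      else if b ∈ φ.pointRadical a then q ^ finrank K V - q ^ 2
      else q ^ (finrank K V - 1) - q ^ 2 := by
  simp only [isotropicFrames, mem_filter, Finset.mem_univ, true_and]
  split_ifs with hba hb
  · simp [linearIndependent_vecThree_iff, hba]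
  all_goals
    have hcount : #{c | LinearIndependent K ![a, b, c] ∧ φ ![a, b, c] = 0} =
        #{c | c ∈ LinearMap.ker (φ.pointForm a b) ∧ c ∉ span K {a, b}} := by
      congr 1; ext c; simp [linearIndependent_vecThree_iff, ha, hba, and_comm]
    rw [hcount, card_filter_mem_and_not_mem (φ.span_pair_le_ker_pointForm a b),
      finrank_span_pair ha hba]
  · have hzero : φ.pointForm a b = 0 := hb
    rw [hzero, LinearMap.ker_zero, finrank_top]
  · have hrank := Module.Dual.finrank_ker_add_one_of_ne_zero (f := φ.pointForm a b) hb
    rw [← hrank, Nat.add_sub_cancel]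

theorem card_isotropicFrames_filter_head {a : V} (ha : a ≠ 0) :
    #{v ∈ φ.isotropicFrames | v 0 = a} =
      (q ^ finrank K (φ.pointRadical a) - q) * (q ^ finrank K V - q ^ 2) +
        (q ^ finrank K V - q ^ finrank K (φ.pointRadical a)) * (q ^ (finrank K V - 1) - q ^ 2) := by
  rw [card_eq_sum_card_fiberwise (f := fun v => v 1) (t := univ) (by simp)]
  simp only [filter_filter, card_filter_vecThree, φ.card_filter_vecThree_mem_isotropicFrames ha]
  rw [sum_ite, sum_const_zero, zero_add, sum_ite, sum_const, sum_const, smul_eq_mul,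
    smul_eq_mul, filter_filter, filter_filter]
  have hle : K ∙ a ≤ φ.pointRadical a :=
    (span_singleton_le_iff_mem _ _).mpr (φ.self_mem_pointRadical a)
  have hrad : #{b | b ∉ K ∙ a ∧ b ∈ φ.pointRadical a} =
      q ^ finrank K (φ.pointRadical a) - q := by
    have hcard := card_filter_mem_and_not_mem hle
    rw [finrank_span_singleton ha, pow_one] at hcard
    rw [← hcard]
    congr 1; ext b; simp [and_comm]
  have hout : #{b | b ∉ K ∙ a ∧ b ∉ φ.pointRadical a} =
      q ^ finrank K V - q ^ finrank K (φ.pointRadical a) := by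
    rw [← finrank_top K V, ← card_filter_mem_and_not_mem le_top]
    congr 1; ext b; simpa using fun hb hba => hb (hle hba)
  rw [hrad, hout]

theorem card_isotropicFrames {r : ℕ}
    (hr : ∀ a : V, a ≠ 0 → finrank K (φ.pointRadical a) = r) :
    #φ.isotropicFrames = (q ^ finrank K V - 1) *
      ((q ^ r - q) * (q ^ finrank K V - q ^ 2) +
        (q ^ finrank K V - q ^ r) * (q ^ (finrank K V - 1) - q ^ 2)) := by
  have hhead : ∀ v ∈ φ.isotropicFrames,
      v 0 ∈ ({a | a ∈ (⊤ : Submodule K V) ∧ a ∉ (⊥ : Submodule K V)} : Finset V) := by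
    intro v hv
    simp only [isotropicFrames, mem_filter, Finset.mem_univ, true_and] at hv
    simpa using hv.1.ne_zero 0
  rw [card_eq_sum_card_fiberwise hhead, sum_const_nat fun a ha => ?_,
    card_filter_mem_and_not_mem bot_le, finrank_top, finrank_bot, pow_zero]
  simp only [mem_filter, Finset.mem_univ, true_and, Submodule.mem_bot] at ha
  rw [φ.card_isotropicFrames_filter_head ha.2, hr a ha.2]

end AlternatingMap

end Counting

end

theorem sq_add_self_add_one_dvd_prod (q : ℕ) :
    q ^ 2 + q + 1 ∣ ∏ i : Fin 3, (q ^ 3 - q ^ (i : ℕ)) := by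
  rw [Fin.prod_univ_succ, Fin.val_zero, pow_zero]
  refine Dvd.dvd.mul_right (Dvd.intro (q - 1) ?_) _
  rcases Nat.eq_zero_or_pos q with rfl | hq
  · rfl
  · zify [hq, Nat.one_le_pow 3 q hq]
    ring

theorem sq_add_self_add_one_not_dvd_of_mod_six_eq_four {q N : ℕ} (hq : 2 ≤ q) (hN : N % 6 = 4) :
    ¬ (q ^ 2 + q + 1) ∣
      (q ^ N - 1) * ((q ^ 2 - q) * (q ^ N - q ^ 2) + (q ^ N - q ^ 2) * (q ^ (N - 1) - q ^ 2)) := by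
  obtain ⟨t, ht⟩ : ∃ t, t = q ^ 2 + q + 1 := ⟨_, rfl⟩
  rw [← ht]
  intro hdvd
  have hx : (q : ZMod t) ^ 2 + q + 1 = 0 := by
    have h : ((q ^ 2 + q + 1 : ℕ) : ZMod t) = 0 := by rw [← ht, ZMod.natCast_self]
    exact_mod_cast h
  have hx3 : (q : ZMod t) ^ 3 = 1 := by linear_combination ((q : ZMod t) - 1) * hx
  have hxN : (q : ZMod t) ^ N = q := by
    rw [show N = 3 * (N / 3) + 1 by omega, pow_succ, pow_mul, hx3, one_pow, one_mul]
  have hxN1 : (q : ZMod t) ^ (N - 1) = 1 := by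
    rw [show N - 1 = 3 * (N / 3) by omega, pow_mul, hx3, one_pow]
  have hle {m n : ℕ} (h : m ≤ n) : q ^ m ≤ q ^ n := Nat.pow_le_pow_right (by omega) h
  have hcast := (ZMod.natCast_eq_zero_iff _ t).mpr hdvd
  push_cast [Nat.cast_sub (Nat.one_le_pow N q (by omega)),
    Nat.cast_sub (Nat.le_self_pow two_ne_zero q), Nat.cast_sub (hle (show 2 ≤ N by omega)),
    Nat.cast_sub (hle (show 2 ≤ N - 1 by omega)), hxN, hxN1] at hcast
  have h36 : ((3 * q + 6 : ℕ) : ZMod t) = 0 := by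
    push_cast
    -- `hcast` says `q (q - 1)³ = 0`, and `q (q - 1)³ + 3q + 6 = (q² + q + 1)(q² - 4q + 6)`
    linear_combination ((q : ZMod t) ^ 2 - 4 * q + 6) * hx - hcast
  have hdvd36 := (ZMod.natCast_eq_zero_iff _ t).mp h36
  have hq3 : q ≤ 3 := by nlinarith [Nat.le_of_dvd (by omega) hdvd36]
  interval_cases q <;> subst ht <;> norm_num at hdvd36

theorem stmt_19_general (K : Type*) [Field K] [Fintype K]
    (V : Type*) [AddCommGroup V] [Module K V] [FiniteDimensional K V]
    (n : ℕ) (hn : finrank K V = n) (hmod : n % 6 = 4)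
    (φ : AlternatingMap K V K (Fin 3)) :
    ¬ ∀ p : Submodule K V, finrank K p = 1 →
        ∃! A : Submodule K V,
          (finrank K A = 2 ∧
            ∀ U : Submodule K V, finrank K U = 3 → A ≤ U →
              ∀ v : Fin 3 → V, (∀ i, v i ∈ U) → φ v = 0) ∧ p ≤ A := by
  intro hspread
  have : Finite V := Module.finite_of_finite K
  have : Fintype V := Fintype.ofFinite V
  have hcount := φ.card_isotropicFrames fun a => φ.finrank_pointRadical_of_isLineSpread hspread
  have hdvd : Fintype.card K ^ 2 + Fintype.card K + 1 ∣ #φ.isotropicFrames :=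
    dvd_trans (sq_add_self_add_one_dvd_prod _) φ.prod_dvd_card_isotropicFrames
  rw [hcount, hn] at hdvd
  exact sq_add_self_add_one_not_dvd_of_mod_six_eq_four Fintype.one_lt_card hmod hdvd

/-- Over a finite field, if `dim V = n` is even with `n ≡ 4 (mod 6)` and `H` is the hyperplane
of the 3-Grassmannian defined by a nontrivial alternating 3-linear form `φ`, then the upper
radical `R^↑(H)` is not a line spread of `PG(V)`: it is not the case that every 1-dimensional
subspace lies on exactly one member of `R^↑(H)`. -/
theorem stmt_19 (K : Type*) [Field K] [Fintype K]
    (V : Type*) [AddCommGroup V] [Module K V] [FiniteDimensional K V]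
    (n : ℕ) (hn : finrank K V = n) (heven : Even n) (hmod : n % 6 = 4)
    (φ : AlternatingMap K V K (Fin 3)) (hφ : φ ≠ 0) :
    ¬ ∀ p : Submodule K V, finrank K p = 1 →
        ∃! A : Submodule K V,
          (finrank K A = 2 ∧
            ∀ U : Submodule K V, finrank K U = 3 → A ≤ U →
              ∀ v : Fin 3 → V, (∀ i, v i ∈ U) → φ v = 0) ∧ p ≤ A :=
  stmt_19_general K V n hn hmod φ
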